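/- Let v₁ = (0,0,0), v₂ = (1000,0,0), v₃ = (198,597,0), v₄ = (404,−380,51), v₅ = (490,249,823), v₆ = (102,−666,715), v₇ = (429,−118,−55), v₈ = (266,847,147), v₉ = (869,136,−214), v₁₀ = (681,−260,685) in ℝ³, and define edge vectors eᵢ = v_{i+1} − vᵢ for i = 1, …, 9 and e₁₀ = v₁ − v₁₀. Then there is no w ∈ ℝ³ such that (−1)^{i+1} (w · eᵢ) > 0 for every i ∈ {1, …, 10}. -/

import Mathlib

/-- The vertices of the paper's 10-stick polygonal realization of the knot `8_13`.
Here `vert8_13 i` is the paper's vertex `v_(i+1)`. -/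
noncomputable def vert8_13 : Fin 10 → (Fin 3 → ℝ) :=
  ![![0, 0, 0], ![1000, 0, 0], ![198, 597, 0], ![404, -380, 51], ![490, 249, 823], ![102, -666, 715], ![429, -118, -55], ![266, 847, 147], ![869, 136, -214], ![681, -260, 685]]

/-- The edge vectors `eᵢ = v_(i+1) − vᵢ` (cyclically, so `e₁₀ = v₁ − v₁₀`);
here `edge8_13 i` is the paper's `e_(i+1)`, using wrap-around addition on `Fin 10`. -/
noncomputable def edge8_13 (i : Fin 10) : Fin 3 → ℝ :=
  vert8_13 (i + 1) - vert8_13 i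

/-!
Read with alternating signs, four of the edges are positively dependent: some combination of
`e₁, −e₂, −e₄, −e₈` with positive coefficients vanishes. A vector `w` as in the theorem would pair
positively with each of these four vectors, hence with their combination, which is `0`. This is
the easy direction of Farkas' lemma.
-/

theorem not_forall_pos_of_sum_smul_eq_zero {𝕜 M ι : Type*} [Field 𝕜] [LinearOrder 𝕜]
    [IsStrictOrderedRing 𝕜] [AddCommGroup M] [Module 𝕜 M] [Fintype ι]
    (f : M →ₗ[𝕜] 𝕜) (v : ι → M) (c : ι → 𝕜) (hc : ∀ i, 0 ≤ c i) (hc_pos : ∃ i, 0 < c i)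
    (hsum : ∑ i, c i • v i = 0) : ¬ ∀ i, 0 < f (v i) := by
  intro hf
  obtain ⟨k, hk⟩ := hc_pos
  have hpos : 0 < ∑ i, c i * f (v i) :=
    Finset.sum_pos' (fun i _ => mul_nonneg (hc i) (hf i).le)
      ⟨k, Finset.mem_univ k, mul_pos hk (hf k)⟩
  have hzero : ∑ i, c i * f (v i) = 0 := by
    simpa only [map_sum, map_smul, smul_eq_mul, map_zero] using congrArg f hsum
  exact hpos.ne' hzero

-- The coefficients of `e₁, −e₂, −e₄, −e₈` (0-based indices `0, 1, 3, 7`), found by solving the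
-- 3 × 4 linear system `∑ cᵢ (−1)^i eᵢ = 0` and clearing denominators.
def farkasCoeff8_13 : Fin 10 → ℝ :=
  ![9586367, 80455750, 0, 53879250, 0, 0, 0, 115221000, 0, 0]

theorem sum_farkasCoeff_smul_alternating_edge8_13 :
    ∑ i, farkasCoeff8_13 i • ((-1 : ℝ) ^ (i : ℕ) • edge8_13 i) = 0 := by
  ext j
  fin_cases j <;> simp [Fin.sum_univ_succ, farkasCoeff8_13, edge8_13, vert8_13] <;> norm_num

/-- There is no `w ∈ ℝ³` such that `(−1)^(i+1) (w · eᵢ) > 0` for every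
`i ∈ {1, …, 10}`: no projection of this polygon (the knot `8_13`) to a line has
5 local maxima. (With 0-based indexing `i : Fin 10`, the sign is `(−1)^i`.) -/
theorem no_alternating_direction_8_13 :
    ¬ ∃ w : Fin 3 → ℝ, ∀ i : Fin 10,
        0 < (-1 : ℝ) ^ (i : ℕ) * ∑ j : Fin 3, w j * edge8_13 i j := by
  rintro ⟨w, hw⟩
  have hc : ∀ i, 0 ≤ farkasCoeff8_13 i := fun i => by
    fin_cases i <;> norm_num [farkasCoeff8_13]
  have hc_pos : 0 < farkasCoeff8_13 0 := by norm_num [farkasCoeff8_13]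
  refine not_forall_pos_of_sum_smul_eq_zero (dotProductBilin ℝ ℝ w)
    (fun i : Fin 10 => (-1 : ℝ) ^ (i : ℕ) • edge8_13 i) farkasCoeff8_13 hc ⟨0, hc_pos⟩
    sum_farkasCoeff_smul_alternating_edge8_13 fun i => ?_
  simpa only [map_smul, smul_eq_mul, dotProductBilin_apply_apply, dotProduct] using hw i
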